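/- Let m be a nonnegative integer, I ∈ 𝕊, and let f : ℝ → ℍ be measurable with ∫_ℝ |f(t)|² dt < ∞. Set φ(t) := e^{−t²/2}·H_m(−t) and define the left-sided quaternionic Fourier–Wigner transform V_I(f,φ)(x+Iy) := (2π)^{−1/2}·∫_ℝ exp(Iyt)·f(t + x/2)·φ(t − x/2) dt. Then for all x ∈ ℝ and y ∈ ℝ, with q := x + Iy: V_I(f,φ)(q) = (√π·m!)^{1/2}·2^{(m−1)/2}·e^{−|q|²/4}·[B_m f](q̄/√2). -/

import Mathlib

open MeasureTheory Quaternion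

noncomputable section

instance : MeasurableSpace ℍ[ℝ] := borel _
instance : BorelSpace ℍ[ℝ] := ⟨rfl⟩

/-- physicists' Hermite polynomial `H_m(x) = (−1)^m e^{x²} (d/dx)^m e^{−x²}` -/
def physHermite (m : ℕ) (x : ℝ) : ℝ :=
  (-1) ^ m * Real.exp (x ^ 2) * iteratedDeriv m (fun t => Real.exp (-t ^ 2)) x

/-- Segal–Bargmann kernel
`A_m(t;q) = π^{−3/4}(2^m m!)^{−1/2}·exp(−t²/2 − q̄²/2 + √2·t·q̄)·H_m(√2·Re q − t)` -/
def kernelA (m : ℕ) (t : ℝ) (q : ℍ[ℝ]) : ℍ[ℝ] :=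
  (Real.pi ^ (-(3 : ℝ) / 4) * (Real.sqrt (2 ^ m * Nat.factorial m))⁻¹) •
    (NormedSpace.exp
        (((-(t ^ 2) / 2 : ℝ) : ℍ[ℝ]) - star q ^ 2 / 2 + (Real.sqrt 2 * t) • star q) *
      ((physHermite m (Real.sqrt 2 * q.re - t) : ℝ) : ℍ[ℝ]))

/-- generalized quaternionic Segal–Bargmann transform `[B_m φ](q) = ∫ A_m(t;q)·φ(t) dt` -/
def SB (m : ℕ) (φ : ℝ → ℍ[ℝ]) (q : ℍ[ℝ]) : ℍ[ℝ] := ∫ t : ℝ, kernelA m t q * φ t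

/-!
Substituting `t = s - x/2` turns the left side into an integral against `f s`, so the identity
is pointwise in `s`. Since `I² = -1`, `p = x + yI` lives in the commutative copy `ℝ + ℝI` of `ℂ`,
and at `q = p̄/√2` the kernel exponent `-s²/2 - q̄²/2 + √2 s q̄` equals
`(-s²/2 + sx - (x² - y²)/4) + y(s - x/2) I`. Its real part, combined with
`e^{-|p|²/4} = e^{-(x² + y²)/4}`, gives the Gaussian `e^{-(s-x)²/2}` of the window, and its
`I`-part the phase `exp(y(s - x/2) I)`.
-/

namespace Quaternion

lemma re_eq_zero_of_sq_eq_neg_one {I : ℍ[ℝ]} (hI : I ^ 2 = -1) : I.re = 0 := by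
  have h := congrArg (fun q : ℍ[ℝ] => (q.re, q.imI, q.imJ, q.imK)) hI
  simp only [sq, re_mul, imI_mul, imJ_mul, imK_mul, re_neg, imI_neg, imJ_neg, imK_neg, re_one,
    imI_one, imJ_one, imK_one, Prod.mk.injEq] at h
  obtain ⟨hre, hi, hj, hk⟩ := h
  nlinarith [sq_nonneg I.re, sq_nonneg I.imI, sq_nonneg I.imJ, sq_nonneg I.imK]

lemma normSq_eq_one_of_sq_eq_neg_one {I : ℍ[ℝ]} (hI : I ^ 2 = -1) : normSq I = 1 := by
  have h := sq_eq_neg_normSq.2 (re_eq_zero_of_sq_eq_neg_one hI)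
  rw [hI, neg_inj, ← coe_one] at h
  exact coe_injective h.symm

lemma coe_add_smul_sq {I : ℍ[ℝ]} (hI : I ^ 2 = -1) (x y : ℝ) :
    ((x : ℍ[ℝ]) + y • I) ^ 2 = ((x ^ 2 - y ^ 2 : ℝ) : ℍ[ℝ]) + (2 * x * y) • I := by
  rw [sq, add_mul, mul_add, mul_add, ← coe_mul, coe_mul_eq_smul, mul_coe_eq_smul,
    smul_mul_smul_comm, ← sq I, hI]
  simp only [← algebraMap_def, Algebra.algebraMap_eq_smul_one]
  module

lemma norm_coe_add_smul_sq {I : ℍ[ℝ]} (hI : I ^ 2 = -1) (x y : ℝ) :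
    ‖(x : ℍ[ℝ]) + y • I‖ ^ 2 = x ^ 2 + y ^ 2 := by
  rw [sq, ← normSq_eq_norm_mul_self, normSq_add, normSq_coe, normSq_smul,
    normSq_eq_one_of_sq_eq_neg_one hI]
  simp [re_eq_zero_of_sq_eq_neg_one hI]

lemma re_coe_add_smul {I : ℍ[ℝ]} (hI : I.re = 0) (x y : ℝ) : ((x : ℍ[ℝ]) + y • I).re = x := by
  simp [hI]

end Quaternion

lemma kernelA_inv_sqrt_two_smul_star (m : ℕ) (t : ℝ) {I : ℍ[ℝ]} (hI : I ^ 2 = -1) (x y : ℝ) :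
    kernelA m t ((Real.sqrt 2)⁻¹ • star ((x : ℍ[ℝ]) + y • I)) =
      (Real.pi ^ (-(3 : ℝ) / 4) * (Real.sqrt (2 ^ m * Nat.factorial m))⁻¹ *
          Real.exp (-(t ^ 2) / 2 + t * x - (x ^ 2 - y ^ 2) / 4) * physHermite m (x - t)) •
        NormedSpace.exp ((y * (t - x / 2)) • I) := by
  have h2 : Real.sqrt 2 ^ 2 = 2 := Real.sq_sqrt zero_le_two
  have h2' : Real.sqrt 2 ≠ 0 := by positivity
  have hstar : star ((Real.sqrt 2)⁻¹ • star ((x : ℍ[ℝ]) + y • I)) =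
      (Real.sqrt 2)⁻¹ • ((x : ℍ[ℝ]) + y • I) := by
    rw [Quaternion.star_smul, star_star]
  have hre : Real.sqrt 2 * ((Real.sqrt 2)⁻¹ • star ((x : ℍ[ℝ]) + y • I)).re - t = x - t := by
    rw [re_smul, re_star, re_coe_add_smul (re_eq_zero_of_sq_eq_neg_one hI), smul_eq_mul,
      mul_inv_cancel_left₀ h2']
  have hhalf (z : ℍ[ℝ]) : z / 2 = (2 : ℝ)⁻¹ • z := by
    rw [Algebra.smul_def, Algebra.commutes, map_inv₀, map_ofNat, div_eq_mul_inv]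
  have hexponent : ((-(t ^ 2) / 2 : ℝ) : ℍ[ℝ]) -
      ((Real.sqrt 2)⁻¹ • ((x : ℍ[ℝ]) + y • I)) ^ 2 / 2 +
        (Real.sqrt 2 * t) • ((Real.sqrt 2)⁻¹ • ((x : ℍ[ℝ]) + y • I)) =
      ((-(t ^ 2) / 2 + t * x - (x ^ 2 - y ^ 2) / 4 : ℝ) : ℍ[ℝ]) + (y * (t - x / 2)) • I := by
    rw [smul_pow, inv_pow, h2, coe_add_smul_sq hI, smul_smul, mul_right_comm _ t,
      mul_inv_cancel₀ h2', one_mul, hhalf]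
    simp only [← algebraMap_def, Algebra.algebraMap_eq_smul_one]
    module
  -- `ℍ` carries no global `ℚ`-normed-algebra instance, which `exp_add_of_commute` needs
  let +nondep : NormedAlgebra ℚ ℍ := .restrictScalars ℚ ℝ ℍ
  rw [kernelA, hstar, hexponent, NormedSpace.exp_add_of_commute (coe_commute _ _), exp_coe,
    ← Real.exp_eq_exp_ℝ, hre, coe_mul_eq_smul, mul_coe_eq_smul, smul_smul, smul_smul]
  ring_nf

lemma inv_sqrt_two_mul_pi_eq (m : ℕ) :
    (Real.sqrt (2 * Real.pi))⁻¹ =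
      Real.sqrt (Real.sqrt Real.pi * Nat.factorial m) * (2 : ℝ) ^ (((m : ℝ) - 1) / 2) *
        (Real.pi ^ (-(3 : ℝ) / 4) * (Real.sqrt (2 ^ m * Nat.factorial m))⁻¹) := by
  have hπ := Real.pi_pos
  have hsqrt_pi_fact : Real.sqrt (Real.sqrt Real.pi * Nat.factorial m) =
      Real.pi ^ (1 / 4 : ℝ) * Real.sqrt (Nat.factorial m) := by
    rw [Real.sqrt_mul (Real.sqrt_nonneg _), Real.sqrt_eq_rpow, Real.sqrt_eq_rpow Real.pi,
      ← Real.rpow_mul hπ.le]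
    norm_num
  have hsqrt_two_pow_fact : Real.sqrt (2 ^ m * Nat.factorial m) =
      (2 : ℝ) ^ ((m : ℝ) / 2) * Real.sqrt (Nat.factorial m) := by
    rw [Real.sqrt_mul (by positivity), Real.sqrt_eq_rpow, ← Real.rpow_natCast 2 m,
      ← Real.rpow_mul zero_le_two, mul_one_div]
  have hsqrt_two_pi : (Real.sqrt (2 * Real.pi))⁻¹ =
      (2 : ℝ) ^ (-(1 : ℝ) / 2) * Real.pi ^ (-(1 : ℝ) / 2) := by
    rw [Real.sqrt_mul zero_le_two, mul_inv, Real.sqrt_eq_rpow, Real.sqrt_eq_rpow,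
      ← Real.rpow_neg zero_le_two, ← Real.rpow_neg hπ.le]
    norm_num
  have hpi : Real.pi ^ (-(1 : ℝ) / 2) = Real.pi ^ (1 / 4 : ℝ) * Real.pi ^ (-(3 : ℝ) / 4) := by
    rw [← Real.rpow_add hπ]
    norm_num
  have htwo : (2 : ℝ) ^ (-(1 : ℝ) / 2) =
      (2 : ℝ) ^ (((m : ℝ) - 1) / 2) * ((2 : ℝ) ^ ((m : ℝ) / 2))⁻¹ := by
    rw [← Real.rpow_neg zero_le_two, ← Real.rpow_add two_pos]
    ring_nf
  rw [hsqrt_pi_fact, hsqrt_two_pow_fact, hsqrt_two_pi, mul_inv, hpi, htwo]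
  field_simp

theorem stmt18_general (m : ℕ) (I : ℍ[ℝ]) (hI : I ^ 2 = -1) (f : ℝ → ℍ[ℝ]) (x y : ℝ) :
    (Real.sqrt (2 * Real.pi))⁻¹ •
        ∫ t : ℝ,
          (Real.exp (-(t - x / 2) ^ 2 / 2) * physHermite m (-(t - x / 2))) •
            (NormedSpace.exp ((y * t) • I) * f (t + x / 2)) =
      (Real.sqrt (Real.sqrt Real.pi * Nat.factorial m) *
          (2 : ℝ) ^ (((m : ℝ) - 1) / 2) *
          Real.exp (-‖(x : ℍ[ℝ]) + y • I‖ ^ 2 / 4)) •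
        SB m f ((Real.sqrt 2)⁻¹ • star ((x : ℍ[ℝ]) + y • I)) := by
  have hshift : (∫ t : ℝ, (Real.exp (-(t - x / 2) ^ 2 / 2) * physHermite m (-(t - x / 2))) •
        (NormedSpace.exp ((y * t) • I) * f (t + x / 2)))
      = ∫ s : ℝ, (Real.exp (-(s - x) ^ 2 / 2) * physHermite m (x - s)) •
          (NormedSpace.exp ((y * (s - x / 2)) • I) * f s) := by
    conv_rhs => rw [← integral_add_right_eq_self _ (x / 2)]
    congr 1
    funext t
    ring_nf
  rw [hshift, SB, ← integral_smul, ← integral_smul]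
  congr 1
  funext s
  rw [kernelA_inv_sqrt_two_smul_star m s hI, norm_coe_add_smul_sq hI, smul_mul_assoc,
    smul_smul, smul_smul, inv_sqrt_two_mul_pi_eq m]
  congr 1
  have hgauss : Real.exp (-(x ^ 2 + y ^ 2) / 4) *
      Real.exp (-(s ^ 2) / 2 + s * x - (x ^ 2 - y ^ 2) / 4) = Real.exp (-(s - x) ^ 2 / 2) := by
    rw [← Real.exp_add]
    ring_nf
  rw [← hgauss]
  ring

/-- For `φ(t) = e^{−t²/2}·H_m(−t)`, the left-sided quaternionic
Fourier–Wigner transform `V_I(f,φ)` satisfies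
`V_I(f,φ)(q) = (√π·m!)^{1/2}·2^{(m−1)/2}·e^{−|q|²/4}·[B_m f](q̄/√2)` at `q = x + Iy`. -/
theorem stmt18 (m : ℕ) (I : ℍ[ℝ]) (hI : I ^ 2 = -1) (f : ℝ → ℍ[ℝ])
    (hf : Measurable f) (hf2 : (∫⁻ t : ℝ, (‖f t‖₊ : ENNReal) ^ 2) < ⊤) (x y : ℝ) :
    (Real.sqrt (2 * Real.pi))⁻¹ •
        ∫ t : ℝ,
          (Real.exp (-(t - x / 2) ^ 2 / 2) * physHermite m (-(t - x / 2))) •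
            (NormedSpace.exp ((y * t) • I) * f (t + x / 2)) =
      (Real.sqrt (Real.sqrt Real.pi * Nat.factorial m) *
          (2 : ℝ) ^ (((m : ℝ) - 1) / 2) *
          Real.exp (-‖(x : ℍ[ℝ]) + y • I‖ ^ 2 / 4)) •
        SB m f ((Real.sqrt 2)⁻¹ • star ((x : ℍ[ℝ]) + y • I)) :=
  stmt18_general m I hI f x y
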